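/- arXiv:1803.02604 — 2 statements merged into one kernel-verified Lean document; each statement's English description precedes it below -/
import Mathlib

section
/- Let n be a positive integer and let α, β be order preserving partial contractions in OCP_n. Then α R* β if and only if ker α = ker β (equality of relations; in particular dom α = dom β and, for all x, y ∈ dom α, xα = yα if and only if xβ = yβ). -/
/-- A partial transformation of the chain `[n] = {1,…,n}`, encoded as a map
`ℕ → Option ℕ`: `α x = some y` means `x ∈ dom α` and `xα = y`. -/
def IsPT (n : ℕ) (α : ℕ → Option ℕ) : Prop :=
  ∀ x y, α x = some y → x ∈ Set.Icc 1 n ∧ y ∈ Set.Icc 1 n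

/-- Composition of partial transformations: apply `α` first, then `β`. -/
def pcomp (α β : ℕ → Option ℕ) : ℕ → Option ℕ := fun x => (α x).bind β

/-- `α` is a contraction: `|xα − yα| ≤ |x − y|` on its domain. -/
def IsContraction (α : ℕ → Option ℕ) : Prop :=
  ∀ x y a b, α x = some a → α y = some b → Nat.dist a b ≤ Nat.dist x y

def IsOrderPreserving (α : ℕ → Option ℕ) : Prop :=
  ∀ x y a b, α x = some a → α y = some b → x ≤ y → a ≤ b

def IsOrderReversing (α : ℕ → Option ℕ) : Prop :=
  ∀ x y a b, α x = some a → α y = some b → x ≤ y → b ≤ a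

/-- `CP n`: the partial contractions of `[n]`. -/
def CP (n : ℕ) (α : ℕ → Option ℕ) : Prop := IsPT n α ∧ IsContraction α

/-- `OCP n`: the order preserving partial contractions of `[n]`. -/
def OCP (n : ℕ) (α : ℕ → Option ℕ) : Prop := CP n α ∧ IsOrderPreserving α

/-- `ORCP n`: the order preserving or order reversing partial contractions of `[n]`. -/
def ORCP (n : ℕ) (α : ℕ → Option ℕ) : Prop :=
  CP n α ∧ (IsOrderPreserving α ∨ IsOrderReversing α)

/-- The image of a partial transformation. -/
def img (α : ℕ → Option ℕ) : Set ℕ := {y | ∃ x, α x = some y}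

/-- The kernel of a partial transformation:
`{(x,y) ∈ dom α × dom α : xα = yα}`. -/
def pker (α : ℕ → Option ℕ) : Set (ℕ × ℕ) :=
  {p | α p.1 ≠ none ∧ α p.1 = α p.2}

/-- The starred Green's relation `L*` relative to the class `S`:
`α L* β` iff for all `γ, δ ∈ S`, `αγ = αδ ⟺ βγ = βδ`. -/
def LStar (S : (ℕ → Option ℕ) → Prop) (α β : ℕ → Option ℕ) : Prop :=
  ∀ γ δ, S γ → S δ → (pcomp α γ = pcomp α δ ↔ pcomp β γ = pcomp β δ)

/-- The starred Green's relation `R*` relative to the class `S`: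
`α R* β` iff for all `γ, δ ∈ S`, `γα = δα ⟺ γβ = δβ`. -/
def RStar (S : (ℕ → Option ℕ) → Prop) (α β : ℕ → Option ℕ) : Prop :=
  ∀ γ δ, S γ → S δ → (pcomp γ α = pcomp δ α ↔ pcomp γ β = pcomp δ β)

/-!
If `ker α = ker β`, then `α` and `β` have the same domain and identify the same points, so
`γα` and `δα` agree exactly where `γβ` and `δβ` do, for arbitrary `γ, δ`. Conversely, for
`(x, y) ∈ ker α` test `R*` against the one-point maps `{x ↦ x}`, `{x ↦ y}` and the empty map,
which are order preserving contractions: `{x ↦ x}α = {x ↦ y}α` forces `xβ = yβ`, and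
`{x ↦ x}α ≠ ∅α` forces `x ∈ dom β`.
-/

def pointMap (x y : ℕ) : ℕ → Option ℕ := fun t => if t = x then some y else none

lemma pointMap_eq_some {x y t a : ℕ} : pointMap x y t = some a ↔ t = x ∧ y = a := by
  simp [pointMap]

lemma pointMap_mem_OCP {n x y : ℕ} (hx : x ∈ Set.Icc 1 n) (hy : y ∈ Set.Icc 1 n) :
    OCP n (pointMap x y) := by
  refine ⟨⟨fun t a h => ?_, fun s t a b hs ht => ?_⟩, fun s t a b hs ht _ => ?_⟩ <;>
    simp only [pointMap_eq_some] at *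
  · obtain ⟨rfl, rfl⟩ := h
    exact ⟨hx, hy⟩
  · obtain ⟨rfl, rfl⟩ := hs
    obtain ⟨rfl, rfl⟩ := ht
    simp
  · obtain ⟨-, rfl⟩ := hs
    obtain ⟨-, rfl⟩ := ht
    rfl

lemma empty_mem_OCP (n : ℕ) : OCP n (fun _ => none) := by
  refine ⟨⟨fun _ _ h => ?_, fun _ _ _ _ h => ?_⟩, fun _ _ _ _ h => ?_⟩ <;> cases h

lemma pcomp_pointMap_apply (α : ℕ → Option ℕ) (x y t : ℕ) :
    pcomp (pointMap x y) α t = if t = x then α y else none := by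
  unfold pcomp pointMap
  split_ifs <;> rfl

section

variable {α β : ℕ → Option ℕ}

lemma RStar.symm {S : (ℕ → Option ℕ) → Prop} (h : RStar S α β) : RStar S β α :=
  fun γ δ hγ hδ => (h γ δ hγ hδ).symm

lemma eq_none_iff_of_pker_eq (h : pker α = pker β) (x : ℕ) : α x = none ↔ β x = none := by
  have hx : (x, x) ∈ pker α ↔ (x, x) ∈ pker β := by rw [h]
  simpa [pker, not_iff_not] using hx

lemma apply_eq_apply_iff_of_pker_eq (h : pker α = pker β) (x y : ℕ) :
    α x = α y ↔ β x = β y := by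
  by_cases hαx : α x = none
  · have hβx := (eq_none_iff_of_pker_eq h x).mp hαx
    rw [hαx, hβx, eq_comm, eq_comm (a := none), eq_none_iff_of_pker_eq h y]
  · have hβx : β x ≠ none := (eq_none_iff_of_pker_eq h x).not.mp hαx
    have hxy : (x, y) ∈ pker α ↔ (x, y) ∈ pker β := by rw [h]
    simpa [pker, hαx, hβx] using hxy

lemma bind_eq_bind_iff_of_pker_eq (h : pker α = pker β) (a b : Option ℕ) :
    a.bind α = b.bind α ↔ a.bind β = b.bind β := by
  cases a <;> cases b <;>
    simp [eq_comm (a := none), eq_none_iff_of_pker_eq h, apply_eq_apply_iff_of_pker_eq h]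

lemma rstar_of_pker_eq (S : (ℕ → Option ℕ) → Prop) (h : pker α = pker β) : RStar S α β :=
  fun γ δ _ _ => by
    simp only [pcomp, funext_iff]
    exact forall_congr' fun t => bind_eq_bind_iff_of_pker_eq h _ _

lemma pker_subset_of_rstar {n : ℕ} (hα : IsPT n α) (h : RStar (OCP n) α β) :
    pker α ⊆ pker β := by
  rintro ⟨x, y⟩ ⟨hαx, hxy⟩
  obtain ⟨a, ha⟩ := Option.ne_none_iff_exists'.mp hαx
  have hx : x ∈ Set.Icc 1 n := (hα x a ha).1
  have hy : y ∈ Set.Icc 1 n := (hα y a (hxy ▸ ha)).1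
  have hβx : β x ≠ none := by
    intro hβx
    have hβ : pcomp (pointMap x x) β = pcomp (fun _ => none) β := by
      funext t
      rw [pcomp_pointMap_apply]
      split_ifs with ht
      · exact ht ▸ hβx
      · rfl
    have hα := congrFun ((h _ _ (pointMap_mem_OCP hx hx) (empty_mem_OCP n)).mpr hβ) x
    rw [pcomp_pointMap_apply, if_pos rfl] at hα
    exact hαx hα
  have hβxy : β x = β y := by
    have hα : pcomp (pointMap x x) α = pcomp (pointMap x y) α := by
      funext t
      simp [pcomp_pointMap_apply, hxy]
    have hβ := congrFun ((h _ _ (pointMap_mem_OCP hx hx) (pointMap_mem_OCP hx hy)).mp hα) x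
    simpa [pcomp_pointMap_apply] using hβ
  exact ⟨hβx, hβxy⟩

end

theorem rstar_iff_ker_eq_OCP_general (n : ℕ) (α β : ℕ → Option ℕ)
    (hα : OCP n α) (hβ : OCP n β) :
    RStar (OCP n) α β ↔ pker α = pker β :=
  ⟨fun h => (pker_subset_of_rstar hα.1.1 h).antisymm (pker_subset_of_rstar hβ.1.1 h.symm),
    rstar_of_pker_eq _⟩

/-- Theorem 2.1(ii) for `OCP n`: `α R* β` iff `ker α = ker β`. -/
theorem rstar_iff_ker_eq_OCP (n : ℕ) (hn : 0 < n) (α β : ℕ → Option ℕ)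
    (hα : OCP n α) (hβ : OCP n β) :
    RStar (OCP n) α β ↔ pker α = pker β :=
  rstar_iff_ker_eq_OCP_general n α β hα hβ
end

section
/- Let n be a positive integer and let α, β be elements of ORCP_n. Then α L* β if and only if im α = im β. -/
lemma pcomp_eq_iff (α γ δ : ℕ → Option ℕ) :
    pcomp α γ = pcomp α δ ↔ ∀ y ∈ img α, γ y = δ y := by
  constructor
  · intro h y hy
    obtain ⟨x, hx⟩ := hy
    have := congrFun h x
    simpa [pcomp, hx] using this
  · intro h
    funext x
    simp only [pcomp]
    cases hx : α x with
    | none => rfl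
    | some y => simpa using h y ⟨x, hx⟩

lemma img_subset_of_lstar (n : ℕ) (α β : ℕ → Option ℕ) (hα : IsPT n α)
    (h : ∀ γ δ, ORCP n γ → ORCP n δ → pcomp β γ = pcomp β δ → pcomp α γ = pcomp α δ) :
    img α ⊆ img β := by
  intro y hy
  by_contra hyβ
  obtain ⟨x, hx⟩ := hy
  set γ : ℕ → Option ℕ := fun z => if z = y then some y else none with hγdef
  have hone : ∀ z w, γ z = some w → z = y ∧ w = y := by
    intro z w hzw
    simp only [hγdef] at hzw
    split at hzw
    · cases hzw; exact ⟨by assumption, rfl⟩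
    · exact absurd hzw (by simp)
  have hyIcc : y ∈ Set.Icc 1 n := (hα x y hx).2
  have hγORCP : ORCP n γ := by
    refine ⟨⟨?_, ?_⟩, Or.inl ?_⟩
    · intro a b hab
      obtain ⟨ha, hb⟩ := hone a b hab
      subst ha; subst hb; exact ⟨hyIcc, hyIcc⟩
    · intro a b c d ha hb
      obtain ⟨ha1, ha2⟩ := hone a c ha
      obtain ⟨hb1, hb2⟩ := hone b d hb
      subst ha1; subst ha2; subst hb1; subst hb2; simp [Nat.dist]
    · intro a b c d ha hb _
      obtain ⟨_, ha2⟩ := hone a c ha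
      obtain ⟨_, hb2⟩ := hone b d hb
      omega
  have hδORCP : ORCP n (fun _ => none) :=
    ⟨⟨fun _ _ hz => by simp at hz, fun _ _ _ _ hz => by simp at hz⟩,
      Or.inl (fun _ _ _ _ hz => by simp at hz)⟩
  have hβeq : pcomp β γ = pcomp β (fun _ => none) :=
    (pcomp_eq_iff β γ _).mpr (by
      intro z hz
      have hzy : z ≠ y := fun hw => hyβ (hw ▸ hz)
      simp [hγdef, hzy])
  have hαeq := h γ _ hγORCP hδORCP hβeq
  have h2 := congrFun hαeq x
  simp [pcomp, hx, hγdef] at h2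

/-- Theorem 2.1(i) for `ORCP n`: `α L* β` iff `im α = im β`. -/
theorem lstar_iff_img_eq_ORCP (n : ℕ) (hn : 0 < n) (α β : ℕ → Option ℕ)
    (hα : ORCP n α) (hβ : ORCP n β) :
    LStar (ORCP n) α β ↔ img α = img β := by
  constructor
  · intro h
    apply Set.Subset.antisymm
    · exact img_subset_of_lstar n α β hα.1.1
        (fun γ δ hγ hδ hb => (h γ δ hγ hδ).mpr hb)
    · exact img_subset_of_lstar n β α hβ.1.1
        (fun γ δ hγ hδ ha => (h γ δ hγ hδ).mp ha)
  · intro h γ δ _ _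
    rw [pcomp_eq_iff, pcomp_eq_iff, h]
end
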